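/- Let p ≥ 2, R > 0, β > 0, and let Z_n (n ≥ 1) and X be jointly measurable random fields from Ω × [0,1] × B(R) to ℝ^d such that, almost surely, |Z_n(t,x) − Z_n(s,y)| ≤ F_n (|x − y|^β + |t − s|^β) and |X(t,x) − X(s,y)| ≤ F (|x − y|^β + |t − s|^β) for all s, t ∈ [0,1] and x, y ∈ B(R), where F_n and F are nonnegative random variables with sup_{n ≥ 1} E(F_n^p) < +∞ and E(F^p) < +∞. If ε_n := sup_{0 ≤ t ≤ 1} sup_{|x| ≤ R} E( |Z_n(t,x) − X(t,x)|^p ) → 0 as n → ∞, then E( sup_{0 ≤ t ≤ 1} sup_{|x| ≤ R} |Z_n(t,x) − X(t,x)|^p ) → 0 as n → ∞. -/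

import Mathlib

open MeasureTheory ProbabilityTheory Filter Topology
open scoped ENNReal

/-!
Cover `[0,1] × B(R)` by a finite `δ`-net `s`. Pathwise, `Z_n - X` differs from its value at a
nearby net point by at most `2δ^β (F_n + F)`, and the maximum over the net is bounded by the sum
over it, so `E sup |Z_n - X|^p ≤ 2^(p-1) (#s · ε_n + 2^p δ^(βp) E (F_n + F)^p)`.
For fixed `δ` the first term tends to zero with `ε_n`; the second is small uniformly in `n` once
`δ` is small, since `F_n` is bounded in `L^p`. Suprema are taken in `ℝ≥0∞`, where they need no
boundedness.
-/

-- No boundedness is needed: on an unbounded family the real `⨆` is the junk value `0`.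
theorem ENNReal.ofReal_iSup_le {ι : Sort*} (f : ι → ℝ) :
    ENNReal.ofReal (⨆ i, f i) ≤ ⨆ i, ENNReal.ofReal (f i) := by
  rcases eq_or_ne (⨆ i, ENNReal.ofReal (f i)) ⊤ with htop | htop
  · simp [htop]
  rw [ENNReal.ofReal_le_iff_le_toReal htop]
  refine Real.iSup_le (fun i => ?_) ENNReal.toReal_nonneg
  calc f i ≤ (ENNReal.ofReal (f i)).toReal := le_max_left _ _
    _ ≤ _ := ENNReal.toReal_mono htop (le_iSup (fun i => ENNReal.ofReal (f i)) i)

theorem ofReal_iSup_iSup_norm_rpow_le {ι κ E : Type*} [SeminormedAddCommGroup E]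
    (f : ι → κ → E) {p : ℝ} (hp : 0 ≤ p) :
    ENNReal.ofReal ((⨆ i, ⨆ j, ‖f i j‖) ^ p) ≤ (⨆ q : ι × κ, ‖f q.1 q.2‖ₑ) ^ p := by
  rw [← ENNReal.ofReal_rpow_of_nonneg (Real.iSup_nonneg fun i => Real.iSup_nonneg fun j =>
    norm_nonneg _) hp, iSup_prod]
  gcongr
  refine (ENNReal.ofReal_iSup_le _).trans (iSup_mono fun i => ?_)
  exact (ENNReal.ofReal_iSup_le _).trans_eq (iSup_congr fun j => ofReal_norm _)

section RandomField

variable {T Ω E : Type*} [MeasurableSpace Ω] {μ : Measure Ω} [NormedAddCommGroup E]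

theorem lintegral_const_mul_add_rpow_le {f g : Ω → ℝ≥0∞} {c : ℝ≥0∞} {p : ℝ} (hc : c ≠ ⊤)
    (hp : 1 ≤ p) (hg : AEMeasurable g μ) :
    ∫⁻ ω, (c * (f ω + g ω)) ^ p ∂μ ≤
      c ^ p * 2 ^ (p - 1) * (∫⁻ ω, f ω ^ p ∂μ + ∫⁻ ω, g ω ^ p ∂μ) := by
  have hp0 : 0 ≤ p := by linarith
  calc ∫⁻ ω, (c * (f ω + g ω)) ^ p ∂μ
      ≤ ∫⁻ ω, c ^ p * 2 ^ (p - 1) * (f ω ^ p + g ω ^ p) ∂μ := lintegral_mono fun ω => by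
        rw [ENNReal.mul_rpow_of_nonneg _ _ hp0, mul_assoc]
        gcongr
        exact ENNReal.rpow_add_le_mul_rpow_add_rpow _ _ hp
    _ = _ := by
        rw [lintegral_const_mul' _ _ (by finiteness), lintegral_add_right' _ (hg.pow_const p)]

theorem iSup_enorm_rpow_le_of_finset_approx {f : T → E} {s : Finset T} {c : ℝ≥0∞} {p : ℝ}
    (hp : 1 ≤ p) (happrox : ∀ q, ∃ i ∈ s, ‖f q - f i‖ₑ ≤ c) :
    (⨆ q, ‖f q‖ₑ) ^ p ≤ 2 ^ (p - 1) * (∑ i ∈ s, ‖f i‖ₑ ^ p + c ^ p) := by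
  have hp0 : 0 < p := by linarith
  rw [← ENNReal.le_rpow_inv_iff hp0]
  refine iSup_le fun q => (ENNReal.le_rpow_inv_iff hp0).2 ?_
  obtain ⟨i, hi, hqi⟩ := happrox q
  calc ‖f q‖ₑ ^ p ≤ (‖f i‖ₑ + c) ^ p := by
        gcongr
        calc ‖f q‖ₑ = ‖f i + (f q - f i)‖ₑ := by rw [add_sub_cancel]
          _ ≤ ‖f i‖ₑ + ‖f q - f i‖ₑ := enorm_add_le _ _
          _ ≤ ‖f i‖ₑ + c := by gcongr
    _ ≤ 2 ^ (p - 1) * (‖f i‖ₑ ^ p + c ^ p) := ENNReal.rpow_add_le_mul_rpow_add_rpow _ _ hp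
    _ ≤ _ := by
        gcongr
        exact Finset.single_le_sum (f := fun j => ‖f j‖ₑ ^ p) (fun _ _ => zero_le) hi

variable [PseudoEMetricSpace T]

theorem exists_finset_forall_exists_edist_le (hT : TotallyBounded (Set.univ : Set T))
    {δ : ℝ≥0∞} (hδ : 0 < δ) : ∃ s : Finset T, ∀ q, ∃ i ∈ s, edist q i ≤ δ := by
  obtain ⟨t, ht, hcover⟩ := EMetric.totallyBounded_iff.1 hT δ hδ
  refine ⟨ht.toFinset, fun q => ?_⟩
  obtain ⟨i, hi, hqi⟩ := Set.mem_iUnion₂.1 (hcover (Set.mem_univ q))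
  exact ⟨i, ht.mem_toFinset.2 hi, (Metric.mem_eball.1 hqi).le⟩

theorem lintegral_iSup_enorm_rpow_le_of_holder {Y : T → Ω → E} {G : Ω → ℝ≥0∞} {s : Finset T}
    {δ : ℝ≥0∞} {p β : ℝ} (hp : 1 ≤ p) (hβ : 0 ≤ β) (hδ : δ ≠ ⊤)
    (hY : ∀ q, AEStronglyMeasurable (Y q) μ) (hs : ∀ q, ∃ i ∈ s, edist q i ≤ δ)
    (hHolder : ∀ᵐ ω ∂μ, ∀ q q', ‖Y q ω - Y q' ω‖ₑ ≤ G ω * edist q q' ^ β) :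
    ∫⁻ ω, (⨆ q, ‖Y q ω‖ₑ) ^ p ∂μ ≤
      2 ^ (p - 1) * (s.card * ⨆ q, ∫⁻ ω, ‖Y q ω‖ₑ ^ p ∂μ) +
        2 ^ (p - 1) * δ ^ (β * p) * ∫⁻ ω, G ω ^ p ∂μ := by
  have hp0 : 0 ≤ p := by linarith
  have hsum : AEMeasurable (fun ω => ∑ i ∈ s, ‖Y i ω‖ₑ ^ p) μ :=
    Finset.aemeasurable_fun_sum _ fun i _ => (hY i).enorm.pow_const p
  have hpathwise : ∀ᵐ ω ∂μ, (⨆ q, ‖Y q ω‖ₑ) ^ p ≤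
      2 ^ (p - 1) * (∑ i ∈ s, ‖Y i ω‖ₑ ^ p + (G ω * δ ^ β) ^ p) := by
    filter_upwards [hHolder] with ω hω
    refine iSup_enorm_rpow_le_of_finset_approx hp fun q => ?_
    obtain ⟨i, hi, hqi⟩ := hs q
    exact ⟨i, hi, (hω q i).trans (by gcongr)⟩
  calc ∫⁻ ω, (⨆ q, ‖Y q ω‖ₑ) ^ p ∂μ
      ≤ ∫⁻ ω, 2 ^ (p - 1) * (∑ i ∈ s, ‖Y i ω‖ₑ ^ p + (G ω * δ ^ β) ^ p) ∂μ :=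
        lintegral_mono_ae hpathwise
    _ = 2 ^ (p - 1) * ∑ i ∈ s, ∫⁻ ω, ‖Y i ω‖ₑ ^ p ∂μ +
          2 ^ (p - 1) * δ ^ (β * p) * ∫⁻ ω, G ω ^ p ∂μ := by
        simp_rw [ENNReal.mul_rpow_of_nonneg _ _ hp0, ← ENNReal.rpow_mul]
        rw [lintegral_const_mul' _ _ (by simp), lintegral_add_left' hsum,
          lintegral_finsetSum' _ fun i _ => (hY i).enorm.pow_const p,
          lintegral_mul_const' _ _ (ENNReal.rpow_ne_top_of_nonneg (by positivity) hδ)]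
        ring
    _ ≤ _ := by
        gcongr
        refine (Finset.sum_le_card_nsmul _ _ _ fun q _ => ?_).trans_eq (nsmul_eq_mul _ _)
        exact le_iSup (fun q => ∫⁻ ω, ‖Y q ω‖ₑ ^ p ∂μ) q

theorem tendsto_lintegral_iSup_enorm_rpow_of_holder {Y : ℕ → T → Ω → E} {G : ℕ → Ω → ℝ≥0∞}
    {p β : ℝ} {C : ℝ≥0∞} (hp : 1 ≤ p) (hβ : 0 < β) (hC : C ≠ ⊤)
    (hT : TotallyBounded (Set.univ : Set T)) (hY : ∀ n q, AEStronglyMeasurable (Y n q) μ)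
    (hHolder : ∀ᶠ n in atTop, ∀ᵐ ω ∂μ, ∀ q q', ‖Y n q ω - Y n q' ω‖ₑ ≤ G n ω * edist q q' ^ β)
    (hG : ∀ᶠ n in atTop, ∫⁻ ω, G n ω ^ p ∂μ ≤ C)
    (hpointwise : Tendsto (fun n => ⨆ q, ∫⁻ ω, ‖Y n q ω‖ₑ ^ p ∂μ) atTop (𝓝 0)) :
    Tendsto (fun n => ∫⁻ ω, (⨆ q, ‖Y n q ω‖ₑ) ^ p ∂μ) atTop (𝓝 0) := by
  have hβp : 0 < β * p := mul_pos hβ (by linarith)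
  have htwo : (2 : ℝ≥0∞) ^ (p - 1) ≠ ⊤ := ENNReal.rpow_ne_top_of_nonneg (by linarith) (by simp)
  rw [ENNReal.tendsto_nhds_zero]
  intro ε hε
  have hε2 : 0 < ε / 2 := ENNReal.half_pos hε.ne'
  obtain ⟨η, hη, hηC⟩ :=
    ENNReal.exists_nnreal_pos_mul_lt (ENNReal.mul_ne_top htwo hC) hε2.ne'
  set δ : ℝ≥0∞ := (η : ℝ≥0∞) ^ (β * p)⁻¹
  have hδη : δ ^ (β * p) = η := ENNReal.rpow_inv_rpow hβp.ne' _
  have hδ : 0 < δ := ENNReal.rpow_pos (by exact_mod_cast hη) ENNReal.coe_ne_top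
  have hδtop : δ ≠ ⊤ := ENNReal.rpow_ne_top_of_nonneg (inv_nonneg.2 hβp.le) ENNReal.coe_ne_top
  obtain ⟨s, hnet⟩ := exists_finset_forall_exists_edist_le hT hδ
  have hnear : ∀ᶠ n in atTop,
      2 ^ (p - 1) * (s.card * ⨆ q, ∫⁻ ω, ‖Y n q ω‖ₑ ^ p ∂μ) ≤ ε / 2 := by
    have hlim := ENNReal.Tendsto.const_mul
      (ENNReal.Tendsto.const_mul hpointwise (Or.inr (ENNReal.natCast_ne_top s.card)))
      (Or.inr htwo)
    simp only [mul_zero] at hlim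
    exact ENNReal.tendsto_nhds_zero.1 hlim _ hε2
  filter_upwards [hHolder, hG, hnear] with n hHn hGn hnear_n
  calc ∫⁻ ω, (⨆ q, ‖Y n q ω‖ₑ) ^ p ∂μ
      ≤ 2 ^ (p - 1) * (s.card * ⨆ q, ∫⁻ ω, ‖Y n q ω‖ₑ ^ p ∂μ) +
          2 ^ (p - 1) * δ ^ (β * p) * ∫⁻ ω, G n ω ^ p ∂μ :=
        lintegral_iSup_enorm_rpow_le_of_holder hp hβ.le hδtop (hY n) hnet hHn
    _ ≤ ε / 2 + η * (2 ^ (p - 1) * C) := by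
        rw [hδη, mul_comm _ (η : ℝ≥0∞), mul_assoc]
        gcongr
    _ ≤ ε / 2 + ε / 2 := by gcongr
    _ = ε := ENNReal.add_halves ε

end RandomField

theorem edist_snd_rpow_add_edist_fst_rpow_le {α β : Type*} [PseudoEMetricSpace α]
    [PseudoEMetricSpace β] {γ : ℝ} (hγ : 0 ≤ γ) (q q' : α × β) :
    edist q.2 q'.2 ^ γ + edist q.1 q'.1 ^ γ ≤ 2 * edist q q' ^ γ := by
  rw [two_mul, Prod.edist_eq]
  gcongr
  exacts [le_max_right _ _, le_max_left _ _]

theorem enorm_sub_le_of_holderOn {E F : Type*} [SeminormedAddCommGroup E]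
    [SeminormedAddCommGroup F] {A : Set ℝ} {B : Set F} {f : ℝ → F → E} {K β : ℝ} (hβ : 0 ≤ β)
    (hf : ∀ s ∈ A, ∀ t ∈ A, ∀ x ∈ B, ∀ y ∈ B,
      ‖f t x - f s y‖ ≤ K * (‖x - y‖ ^ β + |t - s| ^ β))
    (q q' : A × B) :
    ‖f q.1 q.2 - f q'.1 q'.2‖ₑ ≤ 2 * ENNReal.ofReal K * edist q q' ^ β := by
  have hmod : ENNReal.ofReal (‖(q.2 : F) - q'.2‖ ^ β + |(q.1 : ℝ) - q'.1| ^ β) =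
      edist q.2 q'.2 ^ β + edist q.1 q'.1 ^ β := by
    rw [ENNReal.ofReal_add (by positivity) (by positivity),
      ← ENNReal.ofReal_rpow_of_nonneg (norm_nonneg _) hβ,
      ← ENNReal.ofReal_rpow_of_nonneg (abs_nonneg _) hβ, edist_dist, edist_dist,
      Subtype.dist_eq, Subtype.dist_eq, dist_eq_norm, Real.dist_eq]
  calc ‖f q.1 q.2 - f q'.1 q'.2‖ₑ
      ≤ ENNReal.ofReal (K * (‖(q.2 : F) - q'.2‖ ^ β + |(q.1 : ℝ) - q'.1| ^ β)) := by
        rw [← ofReal_norm]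
        exact ENNReal.ofReal_le_ofReal (hf _ q'.1.2 _ q.1.2 _ q.2.2 _ q'.2.2)
    _ = ENNReal.ofReal K * (edist q.2 q'.2 ^ β + edist q.1 q'.1 ^ β) := by
        rw [ENNReal.ofReal_mul' (by positivity), hmod]
    _ ≤ 2 * ENNReal.ofReal K * edist q q' ^ β := by
        rw [mul_comm 2, mul_assoc]
        gcongr
        exact edist_snd_rpow_add_edist_fst_rpow_le hβ q q'

theorem enorm_sub_sub_le_of_holderOn {E F : Type*} [SeminormedAddCommGroup E]
    [SeminormedAddCommGroup F] {A : Set ℝ} {B : Set F} {f g : ℝ → F → E} {K L β : ℝ}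
    (hβ : 0 ≤ β)
    (hf : ∀ s ∈ A, ∀ t ∈ A, ∀ x ∈ B, ∀ y ∈ B,
      ‖f t x - f s y‖ ≤ K * (‖x - y‖ ^ β + |t - s| ^ β))
    (hg : ∀ s ∈ A, ∀ t ∈ A, ∀ x ∈ B, ∀ y ∈ B,
      ‖g t x - g s y‖ ≤ L * (‖x - y‖ ^ β + |t - s| ^ β))
    (q q' : A × B) :
    ‖(f q.1 q.2 - g q.1 q.2) - (f q'.1 q'.2 - g q'.1 q'.2)‖ₑ ≤
      2 * (ENNReal.ofReal K + ENNReal.ofReal L) * edist q q' ^ β := by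
  calc ‖(f q.1 q.2 - g q.1 q.2) - (f q'.1 q'.2 - g q'.1 q'.2)‖ₑ
      ≤ ‖f q.1 q.2 - f q'.1 q'.2‖ₑ + ‖g q.1 q.2 - g q'.1 q'.2‖ₑ := by
        rw [sub_sub_sub_comm]
        exact enorm_sub_le
    _ ≤ 2 * ENNReal.ofReal K * edist q q' ^ β + 2 * ENNReal.ofReal L * edist q q' ^ β :=
        add_le_add (enorm_sub_le_of_holderOn hβ hf q q') (enorm_sub_le_of_holderOn hβ hg q q')
    _ = 2 * (ENNReal.ofReal K + ENNReal.ofReal L) * edist q q' ^ β := by ring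

theorem uniform_moment_convergence_of_pointwise_general
    {Ω : Type*} [MeasureSpace Ω]
    {d : ℕ} (p R β : ℝ) (hp : 2 ≤ p) (hβ : 0 < β)
    (Z : ℕ → ℝ → EuclideanSpace ℝ (Fin d) → Ω → EuclideanSpace ℝ (Fin d))
    (X : ℝ → EuclideanSpace ℝ (Fin d) → Ω → EuclideanSpace ℝ (Fin d))
    (hZmeas : ∀ n, Measurable fun q : Ω × ℝ × EuclideanSpace ℝ (Fin d) =>
      Z n q.2.1 q.2.2 q.1)
    (hXmeas : Measurable fun q : Ω × ℝ × EuclideanSpace ℝ (Fin d) => X q.2.1 q.2.2 q.1)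
    (Fn : ℕ → Ω → ℝ) (F : Ω → ℝ)
    (hFmeas : Measurable F)
    (hFnpos : ∀ n ω, 0 ≤ Fn n ω) (hFpos : ∀ ω, 0 ≤ F ω)
    (hZhold : ∀ n, 1 ≤ n → ∀ᵐ ω,
      ∀ s ∈ Set.Icc (0 : ℝ) 1, ∀ t ∈ Set.Icc (0 : ℝ) 1,
        ∀ x ∈ Metric.closedBall (0 : EuclideanSpace ℝ (Fin d)) R,
          ∀ y ∈ Metric.closedBall (0 : EuclideanSpace ℝ (Fin d)) R,
            ‖Z n t x ω - Z n s y ω‖ ≤ Fn n ω * (‖x - y‖ ^ β + |t - s| ^ β))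
    (hXhold : ∀ᵐ ω,
      ∀ s ∈ Set.Icc (0 : ℝ) 1, ∀ t ∈ Set.Icc (0 : ℝ) 1,
        ∀ x ∈ Metric.closedBall (0 : EuclideanSpace ℝ (Fin d)) R,
          ∀ y ∈ Metric.closedBall (0 : EuclideanSpace ℝ (Fin d)) R,
            ‖X t x ω - X s y ω‖ ≤ F ω * (‖x - y‖ ^ β + |t - s| ^ β))
    (hFnLp : (⨆ (n : ℕ) (_ : 1 ≤ n), ∫⁻ ω, ENNReal.ofReal (Fn n ω ^ p)) < ⊤)
    (hFLp : (∫⁻ ω, ENNReal.ofReal (F ω ^ p)) < ⊤)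
    (hpointwise : Tendsto
      (fun n => ⨆ (t : Set.Icc (0 : ℝ) 1)
          (x : Metric.closedBall (0 : EuclideanSpace ℝ (Fin d)) R),
        ∫⁻ ω, ENNReal.ofReal (‖Z n t.1 x.1 ω - X t.1 x.1 ω‖ ^ p))
      atTop (nhds 0)) :
    Tendsto
      (fun n => ∫⁻ ω, ENNReal.ofReal
        ((⨆ (t : Set.Icc (0 : ℝ) 1)
            (x : Metric.closedBall (0 : EuclideanSpace ℝ (Fin d)) R),
          ‖Z n t.1 x.1 ω - X t.1 x.1 ω‖) ^ p))
      atTop (nhds 0) := by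
  have hp1 : 1 ≤ p := by linarith
  have hp0 : 0 ≤ p := by linarith
  let I := Set.Icc (0 : ℝ) 1
  let B := Metric.closedBall (0 : EuclideanSpace ℝ (Fin d)) R
  let Y : ℕ → I × B → Ω → EuclideanSpace ℝ (Fin d) := fun n q ω => Z n q.1 q.2 ω - X q.1 q.2 ω
  let G : ℕ → Ω → ℝ≥0∞ := fun n ω => 2 * (ENNReal.ofReal (Fn n ω) + ENNReal.ofReal (F ω))
  have hY : ∀ n q, AEStronglyMeasurable (Y n q) := fun n q =>
    have hsection : Measurable fun ω : Ω => (ω, ((q.1 : ℝ), (q.2 : EuclideanSpace ℝ (Fin d)))) :=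
      measurable_id.prodMk measurable_const
    (((hZmeas n).comp hsection).sub (hXmeas.comp hsection)).aestronglyMeasurable
  have hHolder : ∀ᶠ n in atTop, ∀ᵐ ω, ∀ q q',
      ‖Y n q ω - Y n q' ω‖ₑ ≤ G n ω * edist q q' ^ β := by
    filter_upwards [eventually_ge_atTop 1] with n hn
    filter_upwards [hZhold n hn, hXhold] with ω hZω hXω
    exact enorm_sub_sub_le_of_holderOn (f := fun t x => Z n t x ω) (g := fun t x => X t x ω)
      hβ.le hZω hXω
  have hG : ∀ᶠ n in atTop, ∫⁻ ω, G n ω ^ p ≤ 2 ^ p * 2 ^ (p - 1) *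
      ((⨆ (n : ℕ) (_ : 1 ≤ n), ∫⁻ ω, ENNReal.ofReal (Fn n ω ^ p)) +
        ∫⁻ ω, ENNReal.ofReal (F ω ^ p)) := by
    filter_upwards [eventually_ge_atTop 1] with n hn
    refine (lintegral_const_mul_add_rpow_le (by simp) hp1
      hFmeas.ennreal_ofReal.aemeasurable).trans ?_
    rw [lintegral_congr fun ω => ENNReal.ofReal_rpow_of_nonneg (hFnpos n ω) hp0,
      lintegral_congr fun ω => ENNReal.ofReal_rpow_of_nonneg (hFpos ω) hp0]
    gcongr
    exact le_iSup₂ (f := fun (m : ℕ) (_ : 1 ≤ m) => ∫⁻ ω, ENNReal.ofReal (Fn m ω ^ p)) n hn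
  have hpointwise' : Tendsto (fun n => ⨆ q, ∫⁻ ω, ‖Y n q ω‖ₑ ^ p) atTop (𝓝 0) := by
    convert hpointwise using 2 with n
    rw [iSup_prod]
    refine iSup_congr fun t => iSup_congr fun x => lintegral_congr fun ω => ?_
    rw [← ofReal_norm, ENNReal.ofReal_rpow_of_nonneg (norm_nonneg _) hp0]
  have hsup := tendsto_lintegral_iSup_enorm_rpow_of_holder hp1 hβ (by finiteness)
    isCompact_univ.totallyBounded hY hHolder hG hpointwise'
  refine tendsto_of_tendsto_of_tendsto_of_le_of_le tendsto_const_nhds hsup (fun _ => zero_le)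
    fun n => lintegral_mono fun ω => ?_
  exact ofReal_iSup_iSup_norm_rpow_le (fun (t : I) (x : B) => Z n t x ω - X t x ω) hp0

/-- Let `p ≥ 2`, `R > 0`, `β > 0` and let `Z_n` (`n ≥ 1`) and `X` be jointly measurable
random fields on `[0,1] × B(R)` which are a.s. Hölder in `(t,x)` with random constants
`F_n`, `F` bounded in `L^p`. If `ε_n := sup_{t ∈ [0,1]} sup_{|x| ≤ R} E(|Z_n(t,x) - X(t,x)|^p) → 0`,
then `E( sup_{t ∈ [0,1]} sup_{|x| ≤ R} |Z_n(t,x) - X(t,x)|^p ) → 0`. -/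
theorem uniform_moment_convergence_of_pointwise
    {Ω : Type*} [MeasureSpace Ω] [IsProbabilityMeasure (ℙ : Measure Ω)]
    {d : ℕ} (p R β : ℝ) (hp : 2 ≤ p) (hR : 0 < R) (hβ : 0 < β)
    (Z : ℕ → ℝ → EuclideanSpace ℝ (Fin d) → Ω → EuclideanSpace ℝ (Fin d))
    (X : ℝ → EuclideanSpace ℝ (Fin d) → Ω → EuclideanSpace ℝ (Fin d))
    (hZmeas : ∀ n, Measurable fun q : Ω × ℝ × EuclideanSpace ℝ (Fin d) =>
      Z n q.2.1 q.2.2 q.1)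
    (hXmeas : Measurable fun q : Ω × ℝ × EuclideanSpace ℝ (Fin d) => X q.2.1 q.2.2 q.1)
    (Fn : ℕ → Ω → ℝ) (F : Ω → ℝ)
    (hFnmeas : ∀ n, Measurable (Fn n)) (hFmeas : Measurable F)
    (hFnpos : ∀ n ω, 0 ≤ Fn n ω) (hFpos : ∀ ω, 0 ≤ F ω)
    (hZhold : ∀ n, 1 ≤ n → ∀ᵐ ω,
      ∀ s ∈ Set.Icc (0 : ℝ) 1, ∀ t ∈ Set.Icc (0 : ℝ) 1,
        ∀ x ∈ Metric.closedBall (0 : EuclideanSpace ℝ (Fin d)) R,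
          ∀ y ∈ Metric.closedBall (0 : EuclideanSpace ℝ (Fin d)) R,
            ‖Z n t x ω - Z n s y ω‖ ≤ Fn n ω * (‖x - y‖ ^ β + |t - s| ^ β))
    (hXhold : ∀ᵐ ω,
      ∀ s ∈ Set.Icc (0 : ℝ) 1, ∀ t ∈ Set.Icc (0 : ℝ) 1,
        ∀ x ∈ Metric.closedBall (0 : EuclideanSpace ℝ (Fin d)) R,
          ∀ y ∈ Metric.closedBall (0 : EuclideanSpace ℝ (Fin d)) R,
            ‖X t x ω - X s y ω‖ ≤ F ω * (‖x - y‖ ^ β + |t - s| ^ β))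
    (hFnLp : (⨆ (n : ℕ) (_ : 1 ≤ n), ∫⁻ ω, ENNReal.ofReal (Fn n ω ^ p)) < ⊤)
    (hFLp : (∫⁻ ω, ENNReal.ofReal (F ω ^ p)) < ⊤)
    (hpointwise : Tendsto
      (fun n => ⨆ (t : Set.Icc (0 : ℝ) 1)
          (x : Metric.closedBall (0 : EuclideanSpace ℝ (Fin d)) R),
        ∫⁻ ω, ENNReal.ofReal (‖Z n t.1 x.1 ω - X t.1 x.1 ω‖ ^ p))
      atTop (nhds 0)) :
    Tendsto
      (fun n => ∫⁻ ω, ENNReal.ofReal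
        ((⨆ (t : Set.Icc (0 : ℝ) 1)
            (x : Metric.closedBall (0 : EuclideanSpace ℝ (Fin d)) R),
          ‖Z n t.1 x.1 ω - X t.1 x.1 ω‖) ^ p))
      atTop (nhds 0) :=
  uniform_moment_convergence_of_pointwise_general p R β hp hβ Z X hZmeas hXmeas Fn F hFmeas hFnpos
    hFpos hZhold hXhold hFnLp hFLp hpointwise
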